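/- arXiv:2305.01792 — 2 statements merged into one kernel-verified Lean document; each statement's English description precedes it below -/
import Mathlib

section
/- Let θ ∈ (0, 1/2], let 1 ≤ i ≤ ⌊θ⁻¹⌋, and let ε ∈ {−1, 1}. Then for every y in the unit sphere S_{T[θ,S₁]} of T[θ, S₁] one has min( ‖ε e_i + y‖ , ‖ε e_i − y‖ ) ≤ 1. -/
open scoped BigOperators

noncomputable section

/-- Projection of a finitely supported vector onto the coordinates in `E`. -/
def tsProj (E : Finset ℕ+) (x : ℕ+ →₀ ℝ) : ℕ+ →₀ ℝ :=
  x.filter fun i => i ∈ E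

/-- The Schreier families `S_n` on the positive integers:
`S₁` consists of the sets `F` with `|F| ≤ min F` (together with `∅`), and `S_{n+1}`
consists of unions `F₁ ∪ ⋯ ∪ F_d` of nonempty members `F₁ < ⋯ < F_d` of `S_n`
with `d ≤ min F₁` (together with `∅`). -/
def Schreier : ℕ → Set (Finset ℕ+)
  | 0 => {F | F.card ≤ 1}
  | 1 => {F | ∀ a ∈ F, F.card ≤ (a : ℕ)}
  | n + 2 =>
      {F | F = ∅ ∨
        ∃ (d : ℕ) (G : Fin d → Finset ℕ+),
          0 < d ∧ (∀ i, G i ∈ Schreier (n + 1)) ∧ (∀ i, (G i).Nonempty) ∧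
          (∀ i j : Fin d, i < j → ∀ a ∈ G i, ∀ b ∈ G j, a < b) ∧
          (∀ i, ∀ a ∈ G i, d ≤ (a : ℕ)) ∧ F = Finset.univ.biUnion G}

/-- A tuple of nonempty finite sets `E 0 < E 1 < ⋯` whose set of minima belongs to `S`. -/
def TsAdmissible (S : Set (Finset ℕ+)) {d : ℕ} (E : Fin d → Finset ℕ+) : Prop :=
  (∀ i, (E i).Nonempty) ∧
  (∀ i j : Fin d, i < j → ∀ a ∈ E i, ∀ b ∈ E j, a < b) ∧
  ∃ μ : Fin d → ℕ+, (∀ i, IsLeast (↑(E i) : Set ℕ+) (μ i)) ∧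
    Finset.univ.image μ ∈ S

/-- The iterated norms `‖·‖_m` in the construction of the Tsirelson norm:
`‖x‖₀` is the supremum norm and
`‖x‖_{m+1} = max(‖x‖_m, sup{θ ∑ᵢ ‖Eᵢ x‖_m : E₁ < ⋯ < E_d, {min Eᵢ} ∈ S})`. -/
def tnormAux (θ : ℝ) (S : Set (Finset ℕ+)) : ℕ → (ℕ+ →₀ ℝ) → ℝ
  | 0, x => ⨆ i, |x i|
  | m + 1, x =>
      max (tnormAux θ S m x)
        (sSup {r : ℝ | ∃ (d : ℕ) (E : Fin d → Finset ℕ+), TsAdmissible S E ∧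
          r = θ * ∑ i, tnormAux θ S m (tsProj (E i) x)})

/-- The Tsirelson norm `‖x‖_{θ,S} = sup_m ‖x‖_m` on `c₀₀`. -/
def tnorm (θ : ℝ) (S : Set (Finset ℕ+)) (x : ℕ+ →₀ ℝ) : ℝ :=
  ⨆ m : ℕ, tnormAux θ S m x

/-! Helper lemmas -/

def tsl1 (x : ℕ+ →₀ ℝ) : ℝ := ∑ j ∈ x.support, |x j|

lemma tsl1_nonneg (x : ℕ+ →₀ ℝ) : 0 ≤ tsl1 x :=
  Finset.sum_nonneg fun _ _ => abs_nonneg _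

lemma abs_le_tsl1 (x : ℕ+ →₀ ℝ) (j : ℕ+) : |x j| ≤ tsl1 x := by
  by_cases h : j ∈ x.support
  · exact Finset.single_le_sum (fun k _ => abs_nonneg (x k)) h
  · simp [Finsupp.notMem_support_iff.1 h, tsl1_nonneg x]

lemma tsProj_apply (E : Finset ℕ+) (x : ℕ+ →₀ ℝ) (j : ℕ+) :
    tsProj E x j = if j ∈ E then x j else 0 := by
  simp [tsProj, Finsupp.filter_apply]

lemma tsl1_tsProj (E : Finset ℕ+) (x : ℕ+ →₀ ℝ) :
    tsl1 (tsProj E x) = ∑ k ∈ x.support.filter (· ∈ E), |x k| := by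
  rw [tsl1, tsProj, Finsupp.support_filter]
  refine Finset.sum_congr rfl fun k hk => ?_
  rw [Finset.mem_filter] at hk
  rw [Finsupp.filter_apply, if_pos hk.2]

lemma sum_tsl1_le (x : ℕ+ →₀ ℝ) {d : ℕ} (E : Fin d → Finset ℕ+)
    (hord : ∀ i j : Fin d, i < j → ∀ a ∈ E i, ∀ b ∈ E j, a < b) :
    ∑ j : Fin d, tsl1 (tsProj (E j) x) ≤ tsl1 x := by
  have hdisj : (↑(Finset.univ : Finset (Fin d)) : Set (Fin d)).PairwiseDisjoint
      (fun j => x.support.filter (· ∈ E j)) := by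
    intro j _ k _ hjk
    refine Finset.disjoint_left.2 fun a haj hak => ?_
    rw [Finset.mem_filter] at haj hak
    rcases lt_or_gt_of_ne hjk with h | h
    · exact absurd (hord j k h a haj.2 a hak.2) (lt_irrefl a)
    · exact absurd (hord k j h a hak.2 a haj.2) (lt_irrefl a)
  calc ∑ j : Fin d, tsl1 (tsProj (E j) x)
      = ∑ j : Fin d, ∑ k ∈ x.support.filter (· ∈ E j), |x k| := by
        simp [tsl1_tsProj]
    _ = ∑ k ∈ Finset.univ.biUnion (fun j => x.support.filter (· ∈ E j)), |x k| :=
        (Finset.sum_biUnion hdisj).symm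
    _ ≤ ∑ k ∈ x.support, |x k| :=
        Finset.sum_le_sum_of_subset_of_nonneg
          (Finset.biUnion_subset.2 fun j _ => Finset.filter_subset _ _)
          (fun k _ _ => abs_nonneg _)

variable {θ : ℝ} {S : Set (Finset ℕ+)}

lemma tnormAux_nonneg : ∀ (m : ℕ) (x : ℕ+ →₀ ℝ), 0 ≤ tnormAux θ S m x := by
  intro m
  induction m with
  | zero => exact fun x => Real.iSup_nonneg fun k => abs_nonneg _
  | succ m ih => exact fun x => le_trans (ih x) (le_max_left _ _)

lemma tnormAux_le_tsl1 (hθ0 : 0 ≤ θ) (hθ1 : θ ≤ 1) :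
    ∀ (m : ℕ) (x : ℕ+ →₀ ℝ), tnormAux θ S m x ≤ tsl1 x := by
  intro m
  induction m with
  | zero => exact fun x => ciSup_le (abs_le_tsl1 x)
  | succ m ih =>
    intro x
    refine max_le (ih x) (Real.sSup_le ?_ (tsl1_nonneg x))
    rintro r ⟨d, E, hE, rfl⟩
    calc θ * ∑ j, tnormAux θ S m (tsProj (E j) x)
        ≤ 1 * ∑ j, tsl1 (tsProj (E j) x) := by
          exact mul_le_mul hθ1 (Finset.sum_le_sum fun j _ => ih _)
            (Finset.sum_nonneg fun j _ => tnormAux_nonneg m _) zero_le_one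
      _ ≤ tsl1 x := by rw [one_mul]; exact sum_tsl1_le x E hE.2.1

lemma tnormAux_le_tnorm (hθ0 : 0 ≤ θ) (hθ1 : θ ≤ 1) (m : ℕ) (x : ℕ+ →₀ ℝ) :
    tnormAux θ S m x ≤ tnorm θ S x :=
  le_ciSup (f := fun k => tnormAux θ S k x) ⟨tsl1 x, by rintro _ ⟨k, rfl⟩; exact tnormAux_le_tsl1 hθ0 hθ1 k x⟩ m

lemma adm_sum_le_tnorm (hθ0 : 0 ≤ θ) (hθ1 : θ ≤ 1) (m : ℕ) (x : ℕ+ →₀ ℝ)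
    {d : ℕ} (E : Fin d → Finset ℕ+) (hE : TsAdmissible S E) :
    θ * ∑ j, tnormAux θ S m (tsProj (E j) x) ≤ tnorm θ S x := by
  have hbdd : BddAbove {r : ℝ | ∃ (d : ℕ) (E : Fin d → Finset ℕ+), TsAdmissible S E ∧
      r = θ * ∑ i, tnormAux θ S m (tsProj (E i) x)} := by
    refine ⟨tsl1 x, ?_⟩
    rintro r ⟨d', E', hE', rfl⟩
    calc θ * ∑ j, tnormAux θ S m (tsProj (E' j) x)
        ≤ 1 * ∑ j, tsl1 (tsProj (E' j) x) :=
          mul_le_mul hθ1 (Finset.sum_le_sum fun j _ => tnormAux_le_tsl1 hθ0 hθ1 m _)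
            (Finset.sum_nonneg fun j _ => tnormAux_nonneg m _) zero_le_one
      _ ≤ tsl1 x := by rw [one_mul]; exact sum_tsl1_le x E' hE'.2.1
  have h1 : θ * ∑ j, tnormAux θ S m (tsProj (E j) x) ≤ tnormAux θ S (m + 1) x :=
    le_trans (le_csSup hbdd ⟨d, E, hE, rfl⟩) (le_max_right _ _)
  exact le_trans h1 (tnormAux_le_tnorm hθ0 hθ1 (m + 1) x)

lemma tsProj_comm (E F : Finset ℕ+) (x : ℕ+ →₀ ℝ) :
    tsProj E (tsProj F x) = tsProj F (tsProj E x) := by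
  ext j
  rw [tsProj_apply, tsProj_apply, tsProj_apply, tsProj_apply]
  split_ifs <;> rfl

lemma tnormAux_tsProj_le (hθ0 : 0 ≤ θ) (hθ1 : θ ≤ 1) :
    ∀ (m : ℕ) (E : Finset ℕ+) (x : ℕ+ →₀ ℝ),
      tnormAux θ S m (tsProj E x) ≤ tnormAux θ S m x := by
  intro m
  induction m with
  | zero =>
    intro E x
    refine ciSup_le fun j => ?_
    have h1 : |tsProj E x j| ≤ |x j| := by
      rw [tsProj_apply]; split_ifs <;> simp [abs_nonneg]
    exact h1.trans (le_ciSup (f := fun k => |x k|) ⟨tsl1 x, by rintro _ ⟨k, rfl⟩; exact abs_le_tsl1 x k⟩ j)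
  | succ m ih =>
    intro E x
    refine max_le (le_trans (ih E x) (le_max_left _ _)) ?_
    refine Real.sSup_le ?_ (tnormAux_nonneg (m + 1) x)
    rintro r ⟨d, F, hF, rfl⟩
    have step : ∀ j : Fin d, tnormAux θ S m (tsProj (F j) (tsProj E x)) ≤
        tnormAux θ S m (tsProj (F j) x) := by
      intro j
      rw [tsProj_comm]
      exact ih E (tsProj (F j) x)
    have hbdd : BddAbove {r : ℝ | ∃ (d : ℕ) (E' : Fin d → Finset ℕ+), TsAdmissible S E' ∧
        r = θ * ∑ i, tnormAux θ S m (tsProj (E' i) x)} := by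
      refine ⟨tsl1 x, ?_⟩
      rintro r ⟨d', E', hE', rfl⟩
      calc θ * ∑ j, tnormAux θ S m (tsProj (E' j) x)
          ≤ 1 * ∑ j, tsl1 (tsProj (E' j) x) :=
            mul_le_mul hθ1 (Finset.sum_le_sum fun j _ => tnormAux_le_tsl1 hθ0 hθ1 m _)
              (Finset.sum_nonneg fun j _ => tnormAux_nonneg m _) zero_le_one
        _ ≤ tsl1 x := by rw [one_mul]; exact sum_tsl1_le x E' hE'.2.1
    calc θ * ∑ j, tnormAux θ S m (tsProj (F j) (tsProj E x))
        ≤ θ * ∑ j, tnormAux θ S m (tsProj (F j) x) :=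
          mul_le_mul_of_nonneg_left (Finset.sum_le_sum fun j _ => step j) hθ0
      _ ≤ tnormAux θ S (m + 1) x :=
          le_trans (le_csSup hbdd ⟨d, F, hF, rfl⟩) (le_max_right _ _)

lemma tnorm_tsProj_le (hθ0 : 0 ≤ θ) (hθ1 : θ ≤ 1) (E : Finset ℕ+) (x : ℕ+ →₀ ℝ) :
    tnorm θ S (tsProj E x) ≤ tnorm θ S x :=
  ciSup_le fun m => (tnormAux_tsProj_le hθ0 hθ1 m E x).trans (tnormAux_le_tnorm hθ0 hθ1 m x)

lemma abs_coord_le_tnorm (hθ0 : 0 ≤ θ) (hθ1 : θ ≤ 1) (x : ℕ+ →₀ ℝ) (j : ℕ+) :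
    |x j| ≤ tnorm θ S x := by
  have h1 : |x j| ≤ tnormAux θ S 0 x :=
    le_ciSup (f := fun k => |x k|) ⟨tsl1 x, by rintro _ ⟨k, rfl⟩; exact abs_le_tsl1 x k⟩ j
  exact h1.trans (tnormAux_le_tnorm hθ0 hθ1 0 x)

lemma tsProj_single_add_mem {E : Finset ℕ+} {i : ℕ+} (hiE : i ∈ E) (ε : ℝ) (x : ℕ+ →₀ ℝ) :
    tsProj E (Finsupp.single i ε + x) = Finsupp.single i ε + tsProj E x := by
  ext j
  rw [Finsupp.add_apply, tsProj_apply, tsProj_apply, Finsupp.add_apply]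
  by_cases hj : j ∈ E
  · rw [if_pos hj, if_pos hj]
  · rw [if_neg hj, if_neg hj, Finsupp.single_apply,
      if_neg (by rintro rfl; exact hj hiE), zero_add]

lemma tsProj_single_add_notmem {E : Finset ℕ+} {i : ℕ+} (hiE : i ∉ E) (ε : ℝ) (x : ℕ+ →₀ ℝ) :
    tsProj E (Finsupp.single i ε + x) = tsProj E x := by
  ext j
  rw [tsProj_apply, tsProj_apply]
  by_cases hj : j ∈ E
  · rw [if_pos hj, if_pos hj, Finsupp.add_apply, Finsupp.single_apply,
      if_neg (by rintro rfl; exact hiE hj), zero_add]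
  · rw [if_neg hj, if_neg hj]

lemma tsirelson_key {θ : ℝ} (hθ0 : 0 < θ) (hθ1 : θ ≤ 1) (i : ℕ+) (hi : ((i : ℕ) : ℝ) ≤ θ⁻¹)
    (ε : ℝ) (hε : ε = 1 ∨ ε = -1) :
    ∀ (m : ℕ) (x : ℕ+ →₀ ℝ), tnorm θ (Schreier 1) x ≤ 1 → ε * x i ≤ 0 →
      tnormAux θ (Schreier 1) m (Finsupp.single i ε + x) ≤ 1 := by
  have hθ0' : (0 : ℝ) ≤ θ := hθ0.le
  intro m
  induction m with
  | zero =>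
    intro x hx hsign
    refine ciSup_le fun j => ?_
    rw [Finsupp.add_apply, Finsupp.single_apply]
    by_cases hj : i = j
    · subst hj
      rw [if_pos rfl]
      have hxi : |x i| ≤ 1 := (abs_coord_le_tnorm hθ0' hθ1 x i).trans hx
      rw [abs_le] at hxi ⊢
      rcases hε with h | h <;> subst h <;> constructor <;> nlinarith [hxi.1, hxi.2]
    · rw [if_neg hj, zero_add]
      exact (abs_coord_le_tnorm hθ0' hθ1 x j).trans hx
  | succ m ih =>
    intro x hx hsign
    refine max_le (ih x hx hsign) ?_
    refine Real.sSup_le ?_ zero_le_one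
    rintro r ⟨d, E, hE, rfl⟩
    obtain ⟨hne, hord, μ, hμ, hμS⟩ := hE
    by_cases hmem : ∃ j₀ : Fin d, i ∈ E j₀
    · obtain ⟨j₀, hj₀⟩ := hmem
      -- every term is at most 1
      have hterm : ∀ j : Fin d,
          tnormAux θ (Schreier 1) m (tsProj (E j) (Finsupp.single i ε + x)) ≤ 1 := by
        intro j
        by_cases hj : j = j₀
        · subst hj
          rw [tsProj_single_add_mem hj₀]
          refine ih (tsProj (E j) x) ((tnorm_tsProj_le hθ0' hθ1 _ x).trans hx) ?_
          rw [tsProj_apply, if_pos hj₀]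
          exact hsign
        · have hnotmem : i ∉ E j := by
            intro hij
            rcases lt_or_gt_of_ne hj with h | h
            · exact absurd (hord j j₀ h i hij i hj₀) (lt_irrefl i)
            · exact absurd (hord j₀ j h i hj₀ i hij) (lt_irrefl i)
          rw [tsProj_single_add_notmem hnotmem]
          exact (tnormAux_tsProj_le hθ0' hθ1 m _ x).trans
            ((tnormAux_le_tnorm hθ0' hθ1 m x).trans hx)
      -- d ≤ θ⁻¹
      have hinj : Function.Injective μ := by
        intro a b hab
        by_contra hne'
        rcases lt_or_gt_of_ne hne' with h | h
        · exact absurd (hab ▸ hord a b h (μ a) (hμ a).1 (μ b) (hμ b).1) (lt_irrefl (μ b))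
        · exact absurd (hab ▸ hord b a h (μ b) (hμ b).1 (μ a) (hμ a).1) (lt_irrefl (μ b))
      have hcard : (Finset.univ.image μ).card = d := by
        rw [Finset.card_image_of_injective _ hinj, Finset.card_univ, Fintype.card_fin]
      have hS1 : ∀ a ∈ Finset.univ.image μ, (Finset.univ.image μ).card ≤ (a : ℕ) := hμS
      have hdμ : d ≤ ((μ j₀ : ℕ+) : ℕ) := by
        rw [← hcard]
        exact hS1 (μ j₀) (Finset.mem_image.2 ⟨j₀, Finset.mem_univ _, rfl⟩)
      have hμi : ((μ j₀ : ℕ+) : ℕ) ≤ (i : ℕ) := (hμ j₀).2 hj₀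
      have hd : (d : ℝ) ≤ θ⁻¹ := by
        refine le_trans ?_ hi
        exact_mod_cast hdμ.trans hμi
      calc θ * ∑ j, tnormAux θ (Schreier 1) m (tsProj (E j) (Finsupp.single i ε + x))
          ≤ θ * ∑ _j : Fin d, (1 : ℝ) :=
            mul_le_mul_of_nonneg_left (Finset.sum_le_sum fun j _ => hterm j) hθ0'
        _ = θ * d := by simp
        _ ≤ θ * θ⁻¹ := mul_le_mul_of_nonneg_left hd hθ0'
        _ = 1 := mul_inv_cancel₀ hθ0.ne'
    · push_neg at hmem
      have heq : ∀ j : Fin d, tsProj (E j) (Finsupp.single i ε + x) = tsProj (E j) x :=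
        fun j => tsProj_single_add_notmem (hmem j) ε x
      calc θ * ∑ j, tnormAux θ (Schreier 1) m (tsProj (E j) (Finsupp.single i ε + x))
          = θ * ∑ j, tnormAux θ (Schreier 1) m (tsProj (E j) x) := by
            congr 1; exact Finset.sum_congr rfl fun j _ => by rw [heq j]
        _ ≤ tnorm θ (Schreier 1) x :=
            adm_sum_le_tnorm hθ0' hθ1 m x E ⟨hne, hord, μ, hμ, hμS⟩
        _ ≤ 1 := hx

lemma tsirelson_key' {θ : ℝ} (hθ0 : 0 < θ) (hθ1 : θ ≤ 1) (i : ℕ+) (hi : ((i : ℕ) : ℝ) ≤ θ⁻¹)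
    (ε : ℝ) (hε : ε = 1 ∨ ε = -1) (x : ℕ+ →₀ ℝ) (hx : tnorm θ (Schreier 1) x ≤ 1)
    (hsign : ε * x i ≤ 0) : tnorm θ (Schreier 1) (Finsupp.single i ε + x) ≤ 1 :=
  ciSup_le fun m => tsirelson_key hθ0 hθ1 i hi ε hε m x hx hsign


section Embed

variable {X : Type*} [NormedAddCommGroup X] [NormedSpace ℝ X]

def tsEmbed (e : ℕ+ → X) (a : ℕ+ →₀ ℝ) : X := a.sum fun k c => c • e k

lemma tsEmbed_add (e : ℕ+ → X) (a b : ℕ+ →₀ ℝ) :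
    tsEmbed e (a + b) = tsEmbed e a + tsEmbed e b :=
  Finsupp.sum_add_index' (fun k => zero_smul ℝ (e k)) (fun k c₁ c₂ => add_smul c₁ c₂ (e k))

lemma tsEmbed_single (e : ℕ+ → X) (i : ℕ+) (c : ℝ) :
    tsEmbed e (Finsupp.single i c) = c • e i :=
  Finsupp.sum_single_index (zero_smul ℝ (e i))

lemma tsEmbed_smul (e : ℕ+ → X) (c : ℝ) (a : ℕ+ →₀ ℝ) :
    tsEmbed e (c • a) = c • tsEmbed e a := by
  unfold tsEmbed
  rw [Finsupp.sum_smul_index (fun k => zero_smul ℝ (e k)), Finsupp.smul_sum]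
  exact Finsupp.sum_congr fun k _ => mul_smul c (a k) (e k)

end Embed

/-- `X`, together with the sequence `e` of unit vectors, is (a realization of) the
Tsirelson space `T[θ, S_n]`: a Banach space containing `c₀₀` isometrically
(w.r.t. the Tsirelson norm) as a dense subspace, in which `(e i)` is a
(1-unconditional) basis, i.e. every `x` has a unique expansion `x = ∑ᵢ aᵢ eᵢ`. -/
structure IsTsirelsonSpace (θ : ℝ) (n : ℕ) (X : Type*) [NormedAddCommGroup X]
    [NormedSpace ℝ X] (e : ℕ+ → X) : Prop where
  complete : CompleteSpace X
  norm_embed : ∀ a : ℕ+ →₀ ℝ, ‖a.sum fun i c => c • e i‖ = tnorm θ (Schreier n) a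
  dense_embed : DenseRange fun a : ℕ+ →₀ ℝ => a.sum fun i c => c • e i
  expansion : ∀ x : X, ∃! a : ℕ+ → ℝ, HasSum (fun i => a i • e i) x

/-- For `1 ≤ i ≤ ⌊θ⁻¹⌋` and `ε = ±1`, every `y` in the unit sphere of
`T[θ, S₁]` satisfies `min(‖ε eᵢ + y‖, ‖ε eᵢ − y‖) ≤ 1`. -/
theorem tsirelson_min_norm_le_one
    (θ : ℝ) (hθ0 : 0 < θ) (hθ : θ ≤ 1 / 2)
    (X : Type*) [NormedAddCommGroup X] [NormedSpace ℝ X] (e : ℕ+ → X)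
    (hX : IsTsirelsonSpace θ 1 X e)
    (i : ℕ+) (hi : (i : ℕ) ≤ ⌊θ⁻¹⌋₊) (ε : ℝ) (hε : ε = 1 ∨ ε = -1) :
    ∀ y : X, ‖y‖ = 1 → min ‖ε • e i + y‖ ‖ε • e i - y‖ ≤ 1 := by
  intro y hy
  have hθ1 : θ ≤ 1 := hθ.trans (by norm_num)
  have hi' : ((i : ℕ) : ℝ) ≤ θ⁻¹ :=
    le_trans (Nat.cast_le.2 hi) (Nat.floor_le (by positivity))
  have hemb : ∀ a : ℕ+ →₀ ℝ, ‖tsEmbed e a‖ = tnorm θ (Schreier 1) a := hX.norm_embed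
  refine le_of_forall_pos_le_add fun δ hδ => ?_
  obtain ⟨a, ha⟩ := Metric.denseRange_iff.1 hX.dense_embed y (δ / 2) (by positivity)
  have ha' : ‖y - tsEmbed e a‖ < δ / 2 := by
    rw [← dist_eq_norm]; exact ha
  set v := tsEmbed e a with hv
  set t : ℝ := max 1 ‖v‖ with htdef
  have ht1 : 1 ≤ t := le_max_left _ _
  have ht0 : 0 < t := lt_of_lt_of_le one_pos ht1
  have hvt : ‖v‖ ≤ t := le_max_right _ _
  set b := t⁻¹ • a with hb
  have hvb : tsEmbed e b = t⁻¹ • v := tsEmbed_smul e _ _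
  have hnb : tnorm θ (Schreier 1) b ≤ 1 := by
    rw [← hemb b, hvb, norm_smul, Real.norm_eq_abs, abs_of_pos (inv_pos.2 ht0)]
    calc t⁻¹ * ‖v‖ ≤ t⁻¹ * t := mul_le_mul_of_nonneg_left hvt (inv_nonneg.2 ht0.le)
      _ = 1 := inv_mul_cancel₀ ht0.ne'
  have htd : t ≤ 1 + δ / 2 := by
    have h1 : ‖v‖ ≤ ‖y‖ + ‖y - v‖ := by
      calc ‖v‖ = ‖y - (y - v)‖ := by congr 1; abel
        _ ≤ ‖y‖ + ‖y - v‖ := norm_sub_le _ _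
    rw [hy] at h1
    exact max_le (by linarith) (by linarith)
  have hdistb : ‖y - tsEmbed e b‖ ≤ δ := by
    have h2 : ‖v - t⁻¹ • v‖ ≤ δ / 2 := by
      have : v - t⁻¹ • v = (1 - t⁻¹) • v := by rw [sub_smul, one_smul]
      rw [this, norm_smul, Real.norm_eq_abs,
        abs_of_nonneg (by rw [sub_nonneg]; exact inv_le_one_of_one_le₀ ht1)]
      have h3 : (1 - t⁻¹) * ‖v‖ ≤ (1 - t⁻¹) * t :=
        mul_le_mul_of_nonneg_left hvt (by rw [sub_nonneg]; exact inv_le_one_of_one_le₀ ht1)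
      have h4 : (1 - t⁻¹) * t = t - 1 := by
        field_simp
      linarith
    calc ‖y - tsEmbed e b‖ = ‖(y - v) + (v - t⁻¹ • v)‖ := by rw [hvb]; congr 1; abel
      _ ≤ ‖y - v‖ + ‖v - t⁻¹ • v‖ := norm_add_le _ _
      _ ≤ δ := by linarith
  by_cases hs : ε * b i ≤ 0
  · have hkey := tsirelson_key' hθ0 hθ1 i hi' ε hε b hnb hs
    have h5 : ‖ε • e i + tsEmbed e b‖ ≤ 1 := by
      rw [show ε • e i + tsEmbed e b = tsEmbed e (Finsupp.single i ε + b) by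
        rw [tsEmbed_add, tsEmbed_single], hemb]
      exact hkey
    refine le_trans (min_le_left _ _) ?_
    calc ‖ε • e i + y‖ = ‖(ε • e i + tsEmbed e b) + (y - tsEmbed e b)‖ := by congr 1; abel
      _ ≤ ‖ε • e i + tsEmbed e b‖ + ‖y - tsEmbed e b‖ := norm_add_le _ _
      _ ≤ 1 + δ := add_le_add h5 hdistb
  · push_neg at hs
    have hsign : ε * (-b) i ≤ 0 := by
      rw [Finsupp.neg_apply, mul_neg]
      linarith
    have hembneg : tsEmbed e (-b) = -tsEmbed e b := by
      rw [show (-b : ℕ+ →₀ ℝ) = (-1 : ℝ) • b from (neg_one_smul ℝ b).symm,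
        tsEmbed_smul, neg_one_smul]
    have hnnegb : tnorm θ (Schreier 1) (-b) ≤ 1 := by
      rw [← hemb, hembneg, norm_neg, hemb]
      exact hnb
    have hkey := tsirelson_key' hθ0 hθ1 i hi' ε hε (-b) hnnegb hsign
    have h5 : ‖ε • e i - tsEmbed e b‖ ≤ 1 := by
      rw [show ε • e i - tsEmbed e b = tsEmbed e (Finsupp.single i ε + (-b)) by
        rw [tsEmbed_add, tsEmbed_single, hembneg]; abel, hemb]
      exact hkey
    refine le_trans (min_le_right _ _) ?_
    calc ‖ε • e i - y‖ = ‖(ε • e i - tsEmbed e b) - (y - tsEmbed e b)‖ := by congr 1; abel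
      _ ≤ ‖ε • e i - tsEmbed e b‖ + ‖y - tsEmbed e b‖ := norm_sub_le _ _
      _ ≤ 1 + δ := add_le_add h5 hdistb
end
end

section
/- Let θ ∈ (0, 1/2] and let u ∈ S_{T[θ,S₁]} be such that min( ‖u + y‖ , ‖u − y‖ ) ≤ 1 for all y ∈ S_{T[θ,S₁]}. Then u = ε e_i for some ε ∈ {−1, 1} and some 1 ≤ i ≤ ⌊θ⁻¹⌋. -/
open scoped BigOperators

noncomputable section

/-
On finitely supported `x` the Tsirelson norm satisfies `‖x‖_∞ ≤ ‖x‖ ≤ max(‖x‖_∞, θ‖x‖₁)` and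
`θ ∑_{k ∈ F} |x k| ≤ ‖x‖` for every `F ∈ S` (split `x` along the singletons of `F`); in particular
the coefficient functionals have norm at most one.

If two coefficients `a i, a j` of `u` were nonzero, pick signs `s, t` with `|a i + s| > 1` and
`|a j + t| > 1`. Since `2θ ≤ 1`, `y = s eᵢ - t eⱼ` has norm one, yet the `i`-th coefficient of
`u + y` and the `j`-th coefficient of `u - y` exceed one in modulus. Hence `u = ± eᵢ`. If `θ i > 1`,
let `y` be the normalised flat vector on `(i, 2i)` with value `c`: `‖y‖ = 1` forces `c ≥ 1` or
`θ (i - 1) c ≥ 1`, while the Schreier set `[i, 2i)` gives `‖u ± y‖ ≥ θ (1 + (i - 1) c) > 1`.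
-/

open Finset Function

namespace Tsirelson

variable {θ : ℝ} {S : Set (Finset ℕ+)}

def l1Norm (x : ℕ+ →₀ ℝ) : ℝ := ∑ k ∈ x.support, |x k|

lemma l1Norm_nonneg (x : ℕ+ →₀ ℝ) : 0 ≤ l1Norm x :=
  sum_nonneg fun _ _ => abs_nonneg _

lemma abs_apply_le_l1Norm (x : ℕ+ →₀ ℝ) (k : ℕ+) : |x k| ≤ l1Norm x := by
  by_cases hk : k ∈ x.support
  · exact single_le_sum (f := fun k => |x k|) (fun _ _ => abs_nonneg _) hk
  · rw [Finsupp.notMem_support_iff.mp hk, abs_zero]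
    exact l1Norm_nonneg x

lemma l1Norm_le_card_mul {x : ℕ+ →₀ ℝ} {F : Finset ℕ+} {C : ℝ} (hF : x.support ⊆ F)
    (hC : ∀ k, |x k| ≤ C) : l1Norm x ≤ #F * C :=
  calc l1Norm x ≤ ∑ k ∈ F, |x k| :=
        sum_le_sum_of_subset_of_nonneg hF fun _ _ _ => abs_nonneg _
    _ ≤ ∑ _k ∈ F, C := sum_le_sum fun k _ => hC k
    _ = #F * C := by rw [sum_const, nsmul_eq_mul]

lemma tsProj_apply (E : Finset ℕ+) (x : ℕ+ →₀ ℝ) (k : ℕ+) :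
    tsProj E x k = if k ∈ E then x k else 0 :=
  Finsupp.filter_apply _ _ _

lemma l1Norm_tsProj (E : Finset ℕ+) (x : ℕ+ →₀ ℝ) :
    l1Norm (tsProj E x) = ∑ k ∈ x.support with k ∈ E, |x k| := by
  rw [l1Norm, tsProj, Finsupp.support_filter]
  exact sum_congr rfl fun k hk => by rw [Finsupp.filter_apply_pos _ _ (mem_filter.mp hk).2]

lemma sum_l1Norm_tsProj_le {ι : Type*} [Fintype ι] {E : ι → Finset ℕ+}
    (hE : Pairwise (Disjoint on E)) (x : ℕ+ →₀ ℝ) :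
    ∑ l, l1Norm (tsProj (E l) x) ≤ l1Norm x := by
  simp_rw [l1Norm_tsProj]
  have hdisj : (↑(univ : Finset ι) : Set ι).PairwiseDisjoint fun l => {k ∈ x.support | k ∈ E l} :=
    fun l _ l' _ hll' => disjoint_left.mpr fun k hk hk' =>
      disjoint_left.mp (hE hll') (mem_filter.mp hk).2 (mem_filter.mp hk').2
  rw [← sum_biUnion hdisj]
  exact sum_le_sum_of_subset_of_nonneg (biUnion_subset.mpr fun _ _ => filter_subset _ _)
    fun _ _ _ => abs_nonneg _

lemma TsAdmissible.pairwise_disjoint {d : ℕ} {E : Fin d → Finset ℕ+} (hE : TsAdmissible S E) :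
    Pairwise (Disjoint on E) := by
  intro l l' hll'
  refine disjoint_left.mpr fun k hk hk' => ?_
  rcases hll'.lt_or_gt with h | h
  · exact lt_irrefl k (hE.2.1 l l' h k hk k hk')
  · exact lt_irrefl k (hE.2.1 l' l h k hk' k hk)

lemma mul_sum_tnormAux_tsProj_le (hθ0 : 0 ≤ θ) {m : ℕ}
    (hm : ∀ y, tnormAux θ S m y ≤ l1Norm y) {d : ℕ} {E : Fin d → Finset ℕ+}
    (hE : TsAdmissible S E) (x : ℕ+ →₀ ℝ) :
    θ * ∑ l, tnormAux θ S m (tsProj (E l) x) ≤ θ * l1Norm x :=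
  mul_le_mul_of_nonneg_left
    ((sum_le_sum fun _ _ => hm _).trans
      (sum_l1Norm_tsProj_le (TsAdmissible.pairwise_disjoint hE) x)) hθ0

lemma tnormAux_le (hθ0 : 0 ≤ θ) (hθ1 : θ ≤ 1) (m : ℕ) {x : ℕ+ →₀ ℝ} {C : ℝ}
    (hC : ∀ k, |x k| ≤ C) (hl1 : θ * l1Norm x ≤ C) : tnormAux θ S m x ≤ C := by
  induction m generalizing x C with
  | zero => exact ciSup_le hC
  | succ m ih =>
    have hm : ∀ y, tnormAux θ S m y ≤ l1Norm y := fun y =>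
      ih (abs_apply_le_l1Norm y) (mul_le_of_le_one_left (l1Norm_nonneg y) hθ1)
    refine max_le (ih hC hl1) (Real.sSup_le ?_ ((abs_nonneg _).trans (hC 1)))
    rintro _ ⟨d, E, hE, rfl⟩
    exact (mul_sum_tnormAux_tsProj_le hθ0 hm hE x).trans hl1

lemma tnorm_le (hθ0 : 0 ≤ θ) (hθ1 : θ ≤ 1) {x : ℕ+ →₀ ℝ} {C : ℝ}
    (hC : ∀ k, |x k| ≤ C) (hl1 : θ * l1Norm x ≤ C) : tnorm θ S x ≤ C :=
  ciSup_le fun m => tnormAux_le hθ0 hθ1 m hC hl1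

lemma tnormAux_le_l1Norm (hθ0 : 0 ≤ θ) (hθ1 : θ ≤ 1) (m : ℕ) (x : ℕ+ →₀ ℝ) :
    tnormAux θ S m x ≤ l1Norm x :=
  tnormAux_le hθ0 hθ1 m (abs_apply_le_l1Norm x) (mul_le_of_le_one_left (l1Norm_nonneg x) hθ1)

lemma tnormAux_le_tnorm (hθ0 : 0 ≤ θ) (hθ1 : θ ≤ 1) (m : ℕ) (x : ℕ+ →₀ ℝ) :
    tnormAux θ S m x ≤ tnorm θ S x :=
  le_ciSup ⟨l1Norm x, Set.forall_mem_range.mpr (tnormAux_le_l1Norm hθ0 hθ1 · x)⟩ m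

lemma abs_apply_le_tnormAux_zero (x : ℕ+ →₀ ℝ) (k : ℕ+) : |x k| ≤ tnormAux θ S 0 x :=
  le_ciSup (f := fun k => |x k|) ⟨l1Norm x, Set.forall_mem_range.mpr (abs_apply_le_l1Norm x)⟩ k

lemma abs_apply_le_tnorm (hθ0 : 0 ≤ θ) (hθ1 : θ ≤ 1) (x : ℕ+ →₀ ℝ) (k : ℕ+) :
    |x k| ≤ tnorm θ S x :=
  (abs_apply_le_tnormAux_zero x k).trans (tnormAux_le_tnorm hθ0 hθ1 0 x)

lemma tnorm_eq_of_mul_l1Norm_le (hθ0 : 0 ≤ θ) (hθ1 : θ ≤ 1) {x : ℕ+ →₀ ℝ} {C : ℝ}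
    (hC : ∀ k, |x k| ≤ C) {i : ℕ+} (hi : |x i| = C) (hl1 : θ * l1Norm x ≤ C) :
    tnorm θ S x = C :=
  (tnorm_le hθ0 hθ1 hC hl1).antisymm (hi ▸ abs_apply_le_tnorm hθ0 hθ1 x i)

lemma mul_sum_tnormAux_zero_le_tnorm (hθ0 : 0 ≤ θ) (hθ1 : θ ≤ 1) {d : ℕ}
    {E : Fin d → Finset ℕ+} (hE : TsAdmissible S E) (x : ℕ+ →₀ ℝ) :
    θ * ∑ l, tnormAux θ S 0 (tsProj (E l) x) ≤ tnorm θ S x := by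
  have hbdd : BddAbove {r : ℝ | ∃ (d : ℕ) (E : Fin d → Finset ℕ+), TsAdmissible S E ∧
      r = θ * ∑ l, tnormAux θ S 0 (tsProj (E l) x)} := by
    refine ⟨θ * l1Norm x, ?_⟩
    rintro _ ⟨d', E', hE', rfl⟩
    exact mul_sum_tnormAux_tsProj_le hθ0 (tnormAux_le_l1Norm hθ0 hθ1 0) hE' x
  exact (le_max_of_le_right (le_csSup hbdd ⟨d, E, hE, rfl⟩)).trans (tnormAux_le_tnorm hθ0 hθ1 1 x)

lemma tsAdmissible_singletons {F : Finset ℕ+} (hF : F ∈ S) :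
    TsAdmissible S fun l : Fin #F => {F.orderEmbOfFin rfl l} := by
  refine ⟨fun l => singleton_nonempty _, fun l l' h a ha b hb => ?_, F.orderEmbOfFin rfl,
    fun l => by simp, by rwa [image_orderEmbOfFin_univ]⟩
  rw [mem_singleton.mp ha, mem_singleton.mp hb]
  exact (F.orderEmbOfFin rfl).strictMono h

lemma mul_sum_abs_le_tnorm (hθ0 : 0 ≤ θ) (hθ1 : θ ≤ 1) {F : Finset ℕ+} (hF : F ∈ S)
    (x : ℕ+ →₀ ℝ) : θ * ∑ k ∈ F, |x k| ≤ tnorm θ S x := by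
  set f := F.orderEmbOfFin rfl
  have hsum : ∑ k ∈ F, |x k| = ∑ l, |x (f l)| := by
    conv_lhs => rw [← image_orderEmbOfFin_univ F rfl]
    exact sum_image f.injective.injOn
  refine le_trans ?_ (mul_sum_tnormAux_zero_le_tnorm hθ0 hθ1 (tsAdmissible_singletons hF) x)
  rw [hsum]
  refine mul_le_mul_of_nonneg_left (sum_le_sum fun l _ => ?_) hθ0
  calc |x (f l)| = |tsProj {f l} x (f l)| := by rw [tsProj_apply, if_pos (mem_singleton_self _)]
    _ ≤ _ := abs_apply_le_tnormAux_zero _ _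

lemma exists_abs_eq_one_one_lt_abs_add {a : ℝ} (ha : a ≠ 0) : ∃ s : ℝ, |s| = 1 ∧ 1 < |a + s| := by
  rcases ha.lt_or_gt with ha | ha
  · exact ⟨-1, by norm_num, by rw [abs_of_neg (by linarith)]; linarith⟩
  · exact ⟨1, by norm_num, by rw [abs_of_pos (by linarith)]; linarith⟩

lemma card_Ioo_self_add_self_add_one (i : ℕ+) : #(Ioo i (i + i)) + 1 = i := by
  rw [PNat.card_Ioo, PNat.add_coe]
  have := i.pos
  omega

lemma Ico_self_add_self_mem_schreier_one (i : ℕ+) : Ico i (i + i) ∈ Schreier 1 := by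
  intro a ha
  rw [PNat.card_Ico, PNat.add_coe]
  have : i ≤ a := (mem_Ico.mp ha).1
  have : (i : ℕ) ≤ a := this
  omega

lemma mul_one_add_card_mul_le_tnorm (hθ0 : 0 ≤ θ) (hθ1 : θ ≤ 1) {x : ℕ+ →₀ ℝ} {i : ℕ+}
    {c : ℝ} (hi : |x i| = 1) (hc : ∀ k ∈ Ioo i (i + i), |x k| = c) :
    θ * (1 + #(Ioo i (i + i)) * c) ≤ tnorm θ (Schreier 1) x := by
  have hsum : ∑ k ∈ Ico i (i + i), |x k| = 1 + #(Ioo i (i + i)) * c := by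
    rw [← Ioo_insert_left (PNat.lt_add_right i i), sum_insert left_notMem_Ioo, hi,
      sum_congr rfl hc, sum_const, nsmul_eq_mul]
  exact hsum ▸ mul_sum_abs_le_tnorm hθ0 hθ1 (Ico_self_add_self_mem_schreier_one i) x

def flatVector (G : Finset ℕ+) : ℕ+ →₀ ℝ := Finsupp.indicator G fun _ _ => 1

lemma flatVector_apply (G : Finset ℕ+) (k : ℕ+) : flatVector G k = if k ∈ G then 1 else 0 := by
  simp [flatVector, Finsupp.indicator_apply]

lemma tnorm_smul_flatVector_le (hθ0 : 0 ≤ θ) (hθ1 : θ ≤ 1) {c : ℝ} (hc : 0 ≤ c)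
    (G : Finset ℕ+) : tnorm θ S (c • flatVector G) ≤ max c (θ * (#G * c)) := by
  have hle : ∀ k, |(c • flatVector G) k| ≤ c := fun k => by
    rw [Finsupp.smul_apply, smul_eq_mul, flatVector_apply]
    split_ifs <;> simp [abs_of_nonneg hc, hc]
  have hsupp : (c • flatVector G).support ⊆ G :=
    Finsupp.support_smul.trans (Finsupp.support_indicator_subset _ _)
  exact tnorm_le hθ0 hθ1 (fun k => (hle k).trans (le_max_left _ _))
    ((mul_le_mul_of_nonneg_left (l1Norm_le_card_mul hsupp hle) hθ0).trans (le_max_right _ _))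

lemma one_lt_tnorm_single_add_smul_flatVector (hθ0 : 0 < θ) (hθ1 : θ ≤ 1) {i : ℕ+}
    (hθi : 1 < θ * i) {ε σ c : ℝ} (hε : |ε| = 1) (hσ : |σ| = 1) (hc : 0 ≤ c)
    (hc1 : 1 ≤ c ∨ 1 ≤ θ * (#(Ioo i (i + i)) * c)) :
    1 < tnorm θ (Schreier 1) (Finsupp.single i ε + (σ * c) • flatVector (Ioo i (i + i))) := by
  have hG : (#(Ioo i (i + i)) : ℝ) + 1 = i := by
    exact_mod_cast card_Ioo_self_add_self_add_one i
  refine lt_of_lt_of_le ?_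
    (mul_one_add_card_mul_le_tnorm hθ0.le hθ1 (i := i) (c := c) ?_ fun k hk => ?_)
  · rcases hc1 with hc1 | hc1
    · nlinarith [mul_nonneg (mul_nonneg hθ0.le (Nat.cast_nonneg #(Ioo i (i + i))))
        (sub_nonneg.mpr hc1)]
    · nlinarith
  · simp [flatVector_apply, hε]
  · simp [flatVector_apply, hk, (mem_Ioo.mp hk).1.ne', abs_mul, hσ, abs_of_nonneg hc]

end Tsirelson

namespace IsTsirelsonSpace

open Tsirelson

variable {θ : ℝ} {n : ℕ} {X : Type*} [NormedAddCommGroup X] [NormedSpace ℝ X] {e : ℕ+ → X}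

lemma norm_linearCombination (hX : IsTsirelsonSpace θ n X e) (x : ℕ+ →₀ ℝ) :
    ‖Finsupp.linearCombination ℝ e x‖ = tnorm θ (Schreier n) x := by
  rw [Finsupp.linearCombination_apply]
  exact hX.norm_embed x

lemma hasSum_linearCombination (x : ℕ+ →₀ ℝ) :
    HasSum (fun k => x k • e k) (Finsupp.linearCombination ℝ e x) := by
  rw [Finsupp.linearCombination_apply, Finsupp.sum]
  exact hasSum_sum_of_ne_finset_zero fun k hk => by
    rw [Finsupp.notMem_support_iff.mp hk, zero_smul]

lemma norm_basis (hX : IsTsirelsonSpace θ n X e) (hθ0 : 0 ≤ θ) (hθ1 : θ ≤ 1) (i : ℕ+) :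
    ‖e i‖ = 1 := by
  rw [← one_smul ℝ (e i), ← Finsupp.linearCombination_single, hX.norm_linearCombination]
  refine tnorm_eq_of_mul_l1Norm_le hθ0 hθ1 (i := i) (fun k => ?_) (by simp) ?_
  · rw [Finsupp.single_apply]
    split_ifs <;> norm_num
  · calc θ * l1Norm (Finsupp.single i 1) ≤ θ * (#{i} * 1) :=
          mul_le_mul_of_nonneg_left (l1Norm_le_card_mul Finsupp.support_single_subset
            fun k => by rw [Finsupp.single_apply]; split_ifs <;> norm_num) hθ0
      _ ≤ 1 := by simpa using hθ1

lemma abs_coeff_le_norm (hX : IsTsirelsonSpace θ n X e) (hθ0 : 0 ≤ θ) (hθ1 : θ ≤ 1)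
    {a : ℕ+ → ℝ} {x : X} (ha : HasSum (fun k => a k • e k) x) (i : ℕ+) : |a i| ≤ ‖x‖ := by
  refine ge_of_tendsto ha.norm ?_
  filter_upwards [Filter.eventually_ge_atTop {i}] with F hF
  have hsum : ∑ k ∈ F, a k • e k =
      Finsupp.linearCombination ℝ e (∑ k ∈ F, Finsupp.single k (a k)) := by
    simp only [map_sum, Finsupp.linearCombination_single]
  have hcoeff : (∑ k ∈ F, Finsupp.single k (a k)) i = a i := by
    simp [Finsupp.finsetSum_apply, Finsupp.single_apply, singleton_subset_iff.mp hF]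
  rw [hsum, hX.norm_linearCombination, ← hcoeff]
  exact abs_apply_le_tnorm hθ0 hθ1 _ i

theorem coeff_eq_zero_of_min_norm_le_one (hX : IsTsirelsonSpace θ n X e) (hθ0 : 0 ≤ θ)
    (hθ : θ ≤ 1 / 2) {u : X} (h : ∀ y : X, ‖y‖ = 1 → min ‖u + y‖ ‖u - y‖ ≤ 1)
    {a : ℕ+ → ℝ} (ha : HasSum (fun k => a k • e k) u) {i j : ℕ+} (hij : i ≠ j)
    (hai : a i ≠ 0) : a j = 0 := by
  have hθ1 : θ ≤ 1 := by linarith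
  by_contra haj
  obtain ⟨s, hs, hsi⟩ := exists_abs_eq_one_one_lt_abs_add hai
  obtain ⟨t, ht, htj⟩ := exists_abs_eq_one_one_lt_abs_add haj
  set yf := Finsupp.single i s - Finsupp.single j t
  have hyi : yf i = s := by simp [yf, hij.symm]
  have hyj : yf j = -t := by simp [yf, hij]
  have hy_le : ∀ k, |yf k| ≤ 1 := by
    intro k
    rcases eq_or_ne k i with rfl | hki
    · rw [hyi, hs]
    rcases eq_or_ne k j with rfl | hkj
    · rw [hyj, abs_neg, ht]
    simp [yf, hki.symm, hkj.symm]
  have hy_supp : yf.support ⊆ {i, j} := by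
    rw [insert_eq]
    exact Finsupp.support_sub.trans
      (union_subset_union Finsupp.support_single_subset Finsupp.support_single_subset)
  set y := Finsupp.linearCombination ℝ e yf
  have hy : ‖y‖ = 1 := by
    rw [hX.norm_linearCombination]
    refine tnorm_eq_of_mul_l1Norm_le hθ0 hθ1 hy_le (hyi ▸ hs) ?_
    calc θ * l1Norm yf ≤ θ * (#{i, j} * 1) :=
          mul_le_mul_of_nonneg_left (l1Norm_le_card_mul hy_supp hy_le) hθ0
      _ ≤ 1 := by rw [card_pair hij]; push_cast; linarith
  have hadd : 1 < ‖u + y‖ := by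
    have hsum : HasSum (fun k => (a k + yf k) • e k) (u + y) := by
      simpa only [add_smul] using ha.add (hasSum_linearCombination yf)
    exact hsi.trans_le (hyi ▸ hX.abs_coeff_le_norm hθ0 hθ1 hsum i)
  have hsub : 1 < ‖u - y‖ := by
    have hsum : HasSum (fun k => (a k - yf k) • e k) (u - y) := by
      simpa only [sub_smul] using ha.sub (hasSum_linearCombination yf)
    have := hX.abs_coeff_le_norm hθ0 hθ1 hsum j
    rw [hyj, sub_neg_eq_add] at this
    exact htj.trans_le this
  exact (lt_min hadd hsub).not_ge (h y hy)

theorem coe_le_floor_inv_of_min_norm_le_one (hX : IsTsirelsonSpace θ 1 X e) (hθ0 : 0 < θ)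
    (hθ1 : θ ≤ 1) {ε : ℝ} (hε : |ε| = 1) {i : ℕ+}
    (h : ∀ y : X, ‖y‖ = 1 → min ‖ε • e i + y‖ ‖ε • e i - y‖ ≤ 1) : (i : ℕ) ≤ ⌊θ⁻¹⌋₊ := by
  by_contra! hi
  have hθi : 1 < θ * i := by
    have := (Nat.floor_lt (inv_nonneg.mpr hθ0.le)).mp hi
    rwa [inv_lt_iff_one_lt_mul₀' hθ0] at this
  set G := Ioo i (i + i)
  have hi1 : i + 1 ∈ G := by
    have : 1 < (i : ℕ) := by exact_mod_cast (show (1 : ℝ) < i by nlinarith)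
    rw [mem_Ioo, ← PNat.coe_lt_coe, ← PNat.coe_lt_coe, PNat.add_coe, PNat.add_coe, PNat.one_coe]
    constructor <;> omega
  set z := Finsupp.linearCombination ℝ e (flatVector G)
  have hz : z ≠ 0 := by
    have := hX.abs_coeff_le_norm hθ0.le hθ1 (hasSum_linearCombination (flatVector G)) (i + 1)
    rw [flatVector_apply, if_pos hi1, abs_one] at this
    exact norm_pos_iff.mp (one_pos.trans_le this)
  set c := ‖z‖⁻¹
  have hc : 0 ≤ c := inv_nonneg.mpr (norm_nonneg z)
  have hy : ‖c • z‖ = 1 := norm_smul_inv_norm hz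
  have hc1 : 1 ≤ c ∨ 1 ≤ θ * (#G * c) := by
    rw [← le_max_iff, ← hy, ← map_smul, hX.norm_linearCombination]
    exact tnorm_smul_flatVector_le hθ0.le hθ1 hc G
  have key : ∀ σ : ℝ, |σ| = 1 → 1 < ‖ε • e i + σ • c • z‖ := by
    intro σ hσ
    have hsum : ε • e i + σ • c • z =
        Finsupp.linearCombination ℝ e (Finsupp.single i ε + (σ * c) • flatVector G) := by
      simp [z, mul_smul]
    rw [hsum, hX.norm_linearCombination]
    exact one_lt_tnorm_single_add_smul_flatVector hθ0 hθ1 hθi hε hσ hc hc1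
  have hadd := key 1 (by norm_num)
  have hsub := key (-1) (by norm_num)
  rw [one_smul] at hadd
  rw [neg_one_smul, ← sub_eq_add_neg] at hsub
  exact (lt_min hadd hsub).not_ge (h _ hy)

end IsTsirelsonSpace

/-- If `u` in the unit sphere of `T[θ, S₁]` satisfies
`min(‖u + y‖, ‖u − y‖) ≤ 1` for all `y` in the unit sphere, then `u = ± eᵢ` for some
`1 ≤ i ≤ ⌊θ⁻¹⌋`. -/
theorem tsirelson_min_norm_le_one_char
    (θ : ℝ) (hθ0 : 0 < θ) (hθ : θ ≤ 1 / 2)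
    (X : Type*) [NormedAddCommGroup X] [NormedSpace ℝ X] (e : ℕ+ → X)
    (hX : IsTsirelsonSpace θ 1 X e)
    (u : X) (hu : ‖u‖ = 1)
    (h : ∀ y : X, ‖y‖ = 1 → min ‖u + y‖ ‖u - y‖ ≤ 1) :
    ∃ (ε : ℝ) (i : ℕ+), (ε = 1 ∨ ε = -1) ∧ (i : ℕ) ≤ ⌊θ⁻¹⌋₊ ∧ u = ε • e i := by
  have hθ1 : θ ≤ 1 := by linarith
  obtain ⟨a, ha, -⟩ := hX.expansion u
  obtain ⟨i, hai⟩ : ∃ i, a i ≠ 0 := by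
    by_contra! ha0
    have hu0 : u = 0 := ha.unique (by simp [ha0, hasSum_zero])
    simp [hu0] at hu
  have hu_eq : u = a i • e i := ha.unique <| hasSum_single i fun j hji => by
    rw [hX.coeff_eq_zero_of_min_norm_le_one hθ0.le hθ h ha hji.symm hai, zero_smul]
  have hai1 : |a i| = 1 := by
    rwa [hu_eq, norm_smul, hX.norm_basis hθ0.le hθ1, mul_one, Real.norm_eq_abs] at hu
  subst hu_eq
  exact ⟨a i, i, (abs_eq zero_le_one).mp hai1,
    hX.coe_le_floor_inv_of_min_norm_le_one hθ0 hθ1 hai1 h, rfl⟩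
end
end
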